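/- arXiv:2010.04874 — 4 statements merged into one kernel-verified Lean document; each statement's English description precedes it below -/
import Mathlib

section
/- Let r ≥ 2 and let Γ ⊆ (ℕ ∪ {∞})^r be the tropical semiring generated by v_1, …, v_r with (v_i)_i = ∞ and (v_i)_j = 1 for j ≠ i. Then κ = (r−1, …, r−1) is the conductor of Γ: every element of (ℕ∪{∞})^r that is componentwise ≥ κ belongs to Γ, while for each standard basis vector e_i the element κ − e_i does not belong to Γ. -/
/-!
Write `v i` for the generators. The minimum of all `v i` is the constant vector `1` (this needs
`r ≥ 2`), so every constant vector lies in `Γ`, and `∑_{i ≠ j} v i` is `r - 1` at `j` and `⊤`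
elsewhere. Adding a constant to it produces any value `≥ r - 1` at `j`, and the minimum over `j`
of these vectors is an arbitrary `δ ≥ κ`.

Conversely, every `δ ∈ Γ` satisfies `r ≤ δ k + #{j | δ j ≤ δ k}` for all `k`: this holds for `0`
and the `v i`, survives minima since sublevel sets only grow, and survives sums because the
sublevel sets `A`, `B` of `a` and `b` at `k` meet in at least `#A + #B - r` points, all in the
sublevel set of `a + b`. For `κ - e_i` at `k = i` the right-hand side is only `(r - 2) + 1`.
-/

/-- The tropical sub-semiring of `(ℕ∪{∞})^r` generated by a set `G`:
the smallest subset containing `0` and `G`, closed under componentwise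
addition and componentwise minimum. -/
def tropGen {r : ℕ} (G : Set (Fin r → ℕ∞)) : Set (Fin r → ℕ∞) :=
  ⋂₀ {S : Set (Fin r → ℕ∞) | 0 ∈ S ∧ G ⊆ S ∧
      (∀ a ∈ S, ∀ b ∈ S, a + b ∈ S) ∧
      (∀ a ∈ S, ∀ b ∈ S, (fun i => min (a i) (b i)) ∈ S)}

open Finset

section TropGen

variable {r : ℕ} {G : Set (Fin r → ℕ∞)}

theorem tropGen_subset {S : Set (Fin r → ℕ∞)} (h0 : 0 ∈ S) (hG : G ⊆ S)
    (hadd : ∀ a ∈ S, ∀ b ∈ S, a + b ∈ S) (hinf : ∀ a ∈ S, ∀ b ∈ S, a ⊓ b ∈ S) :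
    tropGen G ⊆ S :=
  Set.sInter_subset_of_mem ⟨h0, hG, hadd, hinf⟩

theorem subset_tropGen : G ⊆ tropGen G :=
  fun _ hg => Set.mem_sInter.2 fun _ hS => hS.2.1 hg

theorem inf_mem_tropGen {a b : Fin r → ℕ∞} (ha : a ∈ tropGen G) (hb : b ∈ tropGen G) :
    a ⊓ b ∈ tropGen G :=
  Set.mem_sInter.2 fun S hS => hS.2.2.2 a (Set.mem_sInter.1 ha S hS) b (Set.mem_sInter.1 hb S hS)

theorem inf'_mem_tropGen {ι : Type*} {t : Finset ι} (ht : t.Nonempty) {f : ι → Fin r → ℕ∞}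
    (hf : ∀ i ∈ t, f i ∈ tropGen G) : t.inf' ht f ∈ tropGen G :=
  Finset.inf'_mem _ (fun _ ha _ hb => inf_mem_tropGen ha hb) t ht f hf

variable (G) in
def tropGenAddSubmonoid : AddSubmonoid (Fin r → ℕ∞) where
  carrier := tropGen G
  zero_mem' := Set.mem_sInter.2 fun _ hS => hS.1
  add_mem' ha hb := Set.mem_sInter.2 fun S hS =>
    hS.2.2.1 _ (Set.mem_sInter.1 ha S hS) _ (Set.mem_sInter.1 hb S hS)

end TropGen

section OrdinaryPoint

variable {r : ℕ}

def ordinaryGen (r : ℕ) (i : Fin r) : Fin r → ℕ∞ := fun j => if j = i then ⊤ else 1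

theorem ordinaryGen_mem_tropGen (i : Fin r) :
    ordinaryGen r i ∈ tropGen (Set.range (ordinaryGen r)) :=
  subset_tropGen ⟨i, rfl⟩

theorem const_one_mem_tropGen_ordinaryGen [Nontrivial (Fin r)] :
    (fun _ => 1) ∈ tropGen (Set.range (ordinaryGen r)) := by
  have : univ.inf' univ_nonempty (ordinaryGen r) = fun _ => 1 := by
    funext k
    obtain ⟨i, hik⟩ := exists_ne k
    rw [Finset.inf'_apply]
    refine le_antisymm ((inf'_le _ (mem_univ i)).trans (by simp [ordinaryGen, hik.symm])) ?_
    exact le_inf' _ _ fun j _ => by unfold ordinaryGen; split_ifs <;> simp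
  exact this ▸ inf'_mem_tropGen _ fun i _ => ordinaryGen_mem_tropGen i

theorem sum_ordinaryGen : ∑ i, ordinaryGen r i = fun _ => ⊤ := by
  funext k
  rw [Finset.sum_apply]
  exact WithTop.sum_eq_top.2 ⟨k, mem_univ k, if_pos rfl⟩

theorem const_mem_tropGen_ordinaryGen [Nontrivial (Fin r)] (c : ℕ∞) :
    (fun _ => c) ∈ tropGen (Set.range (ordinaryGen r)) := by
  cases c with
  | top =>
    exact sum_ordinaryGen ▸
      (tropGenAddSubmonoid _).sum_mem fun i _ => ordinaryGen_mem_tropGen i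
  | coe m =>
    have : m • (fun _ => 1 : Fin r → ℕ∞) = fun _ => (m : ℕ∞) := by
      funext k; simp
    exact this ▸ (tropGenAddSubmonoid _).nsmul_mem const_one_mem_tropGen_ordinaryGen m

theorem sum_erase_ordinaryGen (j : Fin r) :
    ∑ i ∈ univ.erase j, ordinaryGen r i = Function.update ⊤ j ((r - 1 : ℕ) : ℕ∞) := by
  funext k
  rw [Finset.sum_apply, Function.update_apply]
  split_ifs with hkj
  · subst hkj
    have : ∀ i ∈ univ.erase k, ordinaryGen r i k = 1 :=
      fun i hi => if_neg (ne_of_mem_erase hi).symm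
    simp [sum_congr rfl this]
  · exact WithTop.sum_eq_top.2 ⟨k, mem_erase.2 ⟨hkj, mem_univ k⟩, if_pos rfl⟩

theorem update_top_mem_tropGen_ordinaryGen [Nontrivial (Fin r)] (j : Fin r) {c : ℕ∞}
    (hc : ((r - 1 : ℕ) : ℕ∞) ≤ c) :
    Function.update ⊤ j c ∈ tropGen (Set.range (ordinaryGen r)) := by
  have : ∑ i ∈ univ.erase j, ordinaryGen r i + (fun _ => c - ((r - 1 : ℕ) : ℕ∞)) =
      Function.update ⊤ j c := by
    funext k
    rw [sum_erase_ordinaryGen, Pi.add_apply, Function.update_apply, Function.update_apply]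
    split_ifs
    · exact add_tsub_cancel_of_le hc
    · exact top_add _
  exact this ▸ (tropGenAddSubmonoid _).add_mem
    ((tropGenAddSubmonoid _).sum_mem fun i _ => ordinaryGen_mem_tropGen i)
    (const_mem_tropGen_ordinaryGen _)

theorem inf'_update_top {ι : Type*} [Fintype ι] [DecidableEq ι] [Nonempty ι] (δ : ι → ℕ∞) :
    univ.inf' univ_nonempty (fun j => Function.update ⊤ j (δ j)) = δ := by
  funext k
  rw [Finset.inf'_apply]
  refine le_antisymm ((inf'_le _ (mem_univ k)).trans (by simp)) (le_inf' _ _ fun j _ => ?_)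
  rw [Function.update_apply]
  split_ifs with hkj
  · exact hkj ▸ le_rfl
  · exact le_top

end OrdinaryPoint

section SublevelCount

variable {ι : Type*} [Fintype ι]

def sublevel (δ : ι → ℕ∞) (k : ι) : Finset ι := {j | δ j ≤ δ k}

theorem mem_sublevel {δ : ι → ℕ∞} {k j : ι} : j ∈ sublevel δ k ↔ δ j ≤ δ k :=
  mem_filter_univ j

def SublevelCountBound (δ : ι → ℕ∞) : Prop :=
  ∀ k, (Fintype.card ι : ℕ∞) ≤ δ k + #(sublevel δ k)

theorem sublevelCountBound_zero : SublevelCountBound (0 : ι → ℕ∞) := fun k => by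
  simp [sublevel, Finset.card_univ]

theorem SublevelCountBound.add [DecidableEq ι] {a b : ι → ℕ∞} (ha : SublevelCountBound a)
    (hb : SublevelCountBound b) : SublevelCountBound (a + b) := fun k => by
  have hcard : #(sublevel a k) + #(sublevel b k) ≤ #(sublevel (a + b) k) + Fintype.card ι := by
    have hsub : sublevel a k ∩ sublevel b k ⊆ sublevel (a + b) k := fun j hj => by
      rw [mem_inter, mem_sublevel, mem_sublevel] at hj
      exact mem_sublevel.2 (add_le_add hj.1 hj.2)
    have := card_union_add_card_inter (sublevel a k) (sublevel b k)
    have := card_le_univ (sublevel a k ∪ sublevel b k)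
    have := card_le_card hsub
    omega
  refine (WithTop.add_le_add_iff_right (WithTop.coe_ne_top (a := Fintype.card ι))).1 ?_
  calc (Fintype.card ι : ℕ∞) + Fintype.card ι
      ≤ (a k + #(sublevel a k)) + (b k + #(sublevel b k)) := add_le_add (ha k) (hb k)
    _ = (a + b) k + ((#(sublevel a k) + #(sublevel b k) : ℕ) : ℕ∞) := by
      push_cast; rw [Pi.add_apply]; ring
    _ ≤ (a + b) k + ((#(sublevel (a + b) k) + Fintype.card ι : ℕ) : ℕ∞) := by gcongr
    _ = (a + b) k + #(sublevel (a + b) k) + Fintype.card ι := by push_cast; ring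

theorem SublevelCountBound.inf {a b : ι → ℕ∞} (ha : SublevelCountBound a)
    (hb : SublevelCountBound b) : SublevelCountBound (a ⊓ b) := by
  have bound_of_le : ∀ a b : ι → ℕ∞, SublevelCountBound a → ∀ k, a k ≤ b k →
      (Fintype.card ι : ℕ∞) ≤ (a ⊓ b) k + #(sublevel (a ⊓ b) k) := by
    intro a b ha k hk
    have hmin : (a ⊓ b) k = a k := inf_eq_left.2 hk
    have hsub : sublevel a k ⊆ sublevel (a ⊓ b) k := fun j hj =>
      mem_sublevel.2 (hmin ▸ inf_le_left.trans (mem_sublevel.1 hj))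
    calc (Fintype.card ι : ℕ∞) ≤ a k + #(sublevel a k) := ha k
      _ ≤ (a ⊓ b) k + #(sublevel (a ⊓ b) k) := by rw [hmin]; gcongr
  intro k
  rcases le_total (a k) (b k) with h | h
  · exact bound_of_le a b ha k h
  · exact inf_comm a b ▸ bound_of_le b a hb k h

theorem sublevelCountBound_ordinaryGen {r : ℕ} (i : Fin r) :
    SublevelCountBound (ordinaryGen r i) := fun k => by
  by_cases hk : k = i
  · simp [ordinaryGen, hk]
  · have : sublevel (ordinaryGen r i) k = univ.erase i := by
      ext j
      by_cases hj : j = i <;> simp [sublevel, ordinaryGen, hj, hk]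
    rw [this, card_erase_of_mem (mem_univ i), card_univ]
    simp only [ordinaryGen, hk, if_false, Fintype.card_fin]
    norm_cast
    omega

theorem tropGen_ordinaryGen_subset_sublevelCountBound {r : ℕ} :
    tropGen (Set.range (ordinaryGen r)) ⊆ {δ | SublevelCountBound δ} :=
  tropGen_subset sublevelCountBound_zero (Set.range_subset_iff.2 sublevelCountBound_ordinaryGen)
    (fun _ ha _ hb => ha.add hb) (fun _ ha _ hb => ha.inf hb)

theorem not_sublevelCountBound_conductor_sub_single {r : ℕ} (hr : 2 ≤ r) (i : Fin r) :
    ¬ SublevelCountBound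
      (fun j => if j = i then ((r - 2 : ℕ) : ℕ∞) else ((r - 1 : ℕ) : ℕ∞)) := fun h => by
  set δ : Fin r → ℕ∞ := fun j => if j = i then ((r - 2 : ℕ) : ℕ∞) else ((r - 1 : ℕ) : ℕ∞)
  have hsub : sublevel δ i ⊆ {i} := fun j hj => by
    by_contra hji
    rw [mem_singleton] at hji
    simp only [mem_sublevel, δ, if_neg hji, if_true, Nat.cast_le] at hj
    omega
  have hcard : #(sublevel δ i) ≤ 1 := (card_le_card hsub).trans_eq (card_singleton i)
  have := (h i).trans (add_le_add_right (Nat.cast_le.2 hcard) _)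
  simp only [δ, if_pos rfl, Fintype.card_fin] at this
  norm_cast at this
  omega

end SublevelCount

/-- `κ = (r−1, …, r−1)` is the conductor of the value semiring of an ordinary
singular point with `r ≥ 2` branches: everything componentwise `≥ κ` lies in the
semiring, while `κ − e_i` does not, for every `i`. -/
theorem conductor_ordinary_point (r : ℕ) (hr : 2 ≤ r) :
    (∀ δ : Fin r → ℕ∞,
        (∀ i, ((r - 1 : ℕ) : ℕ∞) ≤ δ i) →
        δ ∈ tropGen (Set.range (fun i : Fin r => fun j : Fin r =>
          if j = i then (⊤ : ℕ∞) else 1))) ∧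
      (∀ i : Fin r,
        (fun j => if j = i then ((r - 2 : ℕ) : ℕ∞) else ((r - 1 : ℕ) : ℕ∞)) ∉
          tropGen (Set.range (fun i : Fin r => fun j : Fin r =>
            if j = i then (⊤ : ℕ∞) else 1))) := by
  have : Nontrivial (Fin r) := Fin.nontrivial_iff_two_le.2 hr
  refine ⟨fun δ hδ => ?_, fun i hmem => ?_⟩
  · rw [← inf'_update_top δ]
    exact inf'_mem_tropGen _ fun j _ => update_top_mem_tropGen_ordinaryGen j (hδ j)
  · exact not_sublevelCountBound_conductor_sub_single hr i
      (tropGen_ordinaryGen_subset_sublevelCountBound hmem)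
end

section
/- Let r ≥ 2 be a natural number. Define e : ℕ → ℕ by: e(4) = min(2, r); e(5) = 1; and for k ≥ 6: if r is even and k = 3r − 1 then e(k) = r, otherwise e(k) = min(2⌊k/6⌋ + 3, r) when k ≡ 4 (mod 6) and e(k) = min(2⌊k/6⌋ + 1, r) when k ≢ 4 (mod 6). Then (r − 2) + Σ_{k=4}^{3r} (r − e(k)) equals (r−1)(3r−5)/2 if r is odd, and ((r−1)(3r−5) + 1)/2 if r is even. -/
/-- The elimination count `e(k)` for a generic plane curve with `r` branches,
each with value semigroup `⟨2,3⟩` and pairwise intersection multiplicities `6`: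
`e(4) = min(2,r)`, `e(5) = 1`, and for `k ≥ 6`: `e(k) = r` if `r` is even and
`k = 3r − 1`; otherwise `e(k) = min(2⌊k/6⌋+3, r)` if `k ≡ 4 (mod 6)` and
`e(k) = min(2⌊k/6⌋+1, r)` if `k ≢ 4 (mod 6)`. -/
def e23 (r k : ℕ) : ℕ :=
  if k = 4 then min 2 r
  else if k = 5 then 1
  else if Even r ∧ k = 3 * r - 1 then r
  else if k % 6 = 4 then min (2 * (k / 6) + 3) r
  else min (2 * (k / 6) + 1) r

/-!
Write `τ(k)` for `e(k)` without the cap at `r` and without the exception at `k = 3r − 1`.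
Since `r − min(τ, r) = r − τ` in `ℕ`, the sum is `T(r) = Σ_{k=4}^{3r} (r − τ(k))`, less one
for even `r ≥ 4`, where the exceptional term drops from `1` to `0`. Raising `r` by one adds
`#{k : τ(k) ≤ r}` to `T`, and for `r ≥ 3` these `k` are all of `[4, 6m + 5]` except `6m + 4`,
where `m = ⌊(r − 1)/2⌋`. Hence both sides of the identity grow by `6r − 2` from `r` to `r + 2`,
and it remains to check `r ≤ 4`.
-/

open Finset

theorem Finset.sum_add_one_tsub {ι : Type*} (s : Finset ι) (f : ι → ℕ) (n : ℕ) :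
    ∑ i ∈ s, (n + 1 - f i) = ∑ i ∈ s, (n - f i) + #{i ∈ s | f i ≤ n} := by
  rw [card_filter, ← sum_add_distrib]
  refine sum_congr rfl fun i _ => ?_
  split_ifs <;> omega

def e23Uncapped (k : ℕ) : ℕ :=
  if k = 4 then 2
  else if k = 5 then 1
  else if k % 6 = 4 then 2 * (k / 6) + 3
  else 2 * (k / 6) + 1

lemma tsub_e23_add_ite_eq (r k : ℕ) (hr : 3 ≤ r) :
    r - e23 r k + (if k = 3 * r - 1 then if Even r then 1 else 0 else 0) =
      r - e23Uncapped k := by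
  unfold e23 e23Uncapped
  simp only [Nat.even_iff]
  split_ifs <;> omega

lemma le_e23Uncapped_of_lt {r k : ℕ} (hk : 3 * r < k) : r ≤ e23Uncapped k := by
  unfold e23Uncapped
  split_ifs <;> omega

def uncappedDefect (r : ℕ) : ℕ := ∑ k ∈ Icc 4 (3 * r), (r - e23Uncapped k)

lemma sum_tsub_e23_add_ite_eq (r : ℕ) (hr : 3 ≤ r) :
    ∑ k ∈ Icc 4 (3 * r), (r - e23 r k) + (if Even r then 1 else 0) = uncappedDefect r := by
  have hmem : 3 * r - 1 ∈ Icc 4 (3 * r) := mem_Icc.2 ⟨by omega, by omega⟩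
  rw [uncappedDefect, ← sum_congr rfl fun k _ => tsub_e23_add_ite_eq r k hr,
    sum_add_distrib, sum_ite_eq', if_pos hmem]

lemma uncappedDefect_add_one (r : ℕ) :
    uncappedDefect (r + 1) =
      uncappedDefect r + #{k ∈ Icc 4 (3 * r + 3) | e23Uncapped k ≤ r} := by
  have hsub : Icc 4 (3 * r) ⊆ Icc 4 (3 * r + 3) := Icc_subset_Icc le_rfl (by omega)
  have hext : ∑ k ∈ Icc 4 (3 * r + 3), (r - e23Uncapped k) = uncappedDefect r := by
    refine (sum_subset hsub fun k hk hk' => ?_).symm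
    simp only [mem_Icc, not_and, not_le] at hk hk'
    exact Nat.sub_eq_zero_of_le (le_e23Uncapped_of_lt (hk' hk.1))
  rw [uncappedDefect, show 3 * (r + 1) = 3 * r + 3 by ring, sum_add_one_tsub, hext]

lemma filter_e23Uncapped_le (r : ℕ) (hr : 3 ≤ r) :
    {k ∈ Icc 4 (3 * r + 3) | e23Uncapped k ≤ r} =
      (Icc 4 (6 * ((r - 1) / 2) + 5)).erase (6 * ((r - 1) / 2) + 4) := by
  ext k
  rw [mem_filter]
  simp only [mem_Icc, mem_erase, e23Uncapped]
  split_ifs <;> omega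

lemma card_filter_e23Uncapped_le (r : ℕ) (hr : 3 ≤ r) :
    #{k ∈ Icc 4 (3 * r + 3) | e23Uncapped k ≤ r} = 6 * ((r - 1) / 2) + 1 := by
  rw [filter_e23Uncapped_le r hr, card_erase_of_mem (mem_Icc.2 ⟨by omega, by omega⟩),
    Nat.card_Icc]
  omega

lemma uncappedDefect_add_two (r : ℕ) (hr : 3 ≤ r) :
    uncappedDefect (r + 2) = uncappedDefect r + (6 * r - 4) := by
  rw [uncappedDefect_add_one, uncappedDefect_add_one, card_filter_e23Uncapped_le r hr,
    card_filter_e23Uncapped_le (r + 1) (by omega)]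
  omega

def moduliDim (r : ℕ) : ℕ := (r - 2) + ∑ k ∈ Icc 4 (3 * r), (r - e23 r k)

def moduliDimFormula (r : ℕ) : ℕ :=
  if Odd r then (r - 1) * (3 * r - 5) / 2 else ((r - 1) * (3 * r - 5) + 1) / 2

lemma moduliDim_add_two (r : ℕ) (hr : 3 ≤ r) :
    moduliDim (r + 2) = moduliDim r + (6 * r - 2) := by
  have h := sum_tsub_e23_add_ite_eq r hr
  have h2 := sum_tsub_e23_add_ite_eq (r + 2) (by omega)
  rw [uncappedDefect_add_two r hr] at h2
  simp only [Nat.even_add, even_two, iff_true] at h2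
  unfold moduliDim
  split_ifs at h h2 <;> omega

lemma moduliDimFormula_add_two (r : ℕ) (hr : 1 ≤ r) :
    moduliDimFormula (r + 2) = moduliDimFormula r + (6 * r - 2) := by
  have hprod :
      (r + 2 - 1) * (3 * (r + 2) - 5) = (r - 1) * (3 * r - 5) + 2 * (6 * r - 2) := by
    obtain rfl | ⟨n, rfl⟩ : r = 1 ∨ ∃ n, r = n + 2 :=
      (eq_or_lt_of_le hr).imp Eq.symm fun _ => ⟨r - 2, by omega⟩
    · rfl
    · rw [show n + 2 + 2 - 1 = n + 3 by omega, show 3 * (n + 2 + 2) - 5 = 3 * n + 7 by omega,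
        show n + 2 - 1 = n + 1 by omega, show 3 * (n + 2) - 5 = 3 * n + 1 by omega,
        show 6 * (n + 2) - 2 = 6 * n + 10 by omega]
      ring
  have hodd : Odd (r + 2) ↔ Odd r := by simp [Nat.odd_add]
  simp only [moduliDimFormula, hodd, hprod]
  generalize (r - 1) * (3 * r - 5) = p
  split_ifs <;> omega

theorem dim_moduli_two_three_general (r : ℕ) :
    (r - 2) + ∑ k ∈ Finset.Icc 4 (3 * r), (r - e23 r k) =
      if Odd r then (r - 1) * (3 * r - 5) / 2
      else ((r - 1) * (3 * r - 5) + 1) / 2 := by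
  change moduliDim r = moduliDimFormula r
  induction r using Nat.strong_induction_on with
  | _ r ih =>
    obtain hr | ⟨n, hn, rfl⟩ : r < 5 ∨ ∃ n, 3 ≤ n ∧ r = n + 2 :=
      (lt_or_ge r 5).imp_right fun h => ⟨r - 2, by omega, by omega⟩
    · interval_cases r <;> decide
    · rw [moduliDim_add_two n hn, ih n (by omega), moduliDimFormula_add_two n (by omega)]

/-- Dimension of the generic component of the moduli space `M_r(2,3)`:
`(r−2) + Σ_{k=4}^{3r} (r − e(k))` equals `(r−1)(3r−5)/2` for `r` odd and
`((r−1)(3r−5)+1)/2` for `r` even. -/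
theorem dim_moduli_two_three (r : ℕ) (hr : 2 ≤ r) :
    (r - 2) + ∑ k ∈ Finset.Icc 4 (3 * r), (r - e23 r k) =
      if Odd r then (r - 1) * (3 * r - 5) / 2
      else ((r - 1) * (3 * r - 5) + 1) / 2 :=
  dim_moduli_two_three_general r
end

section
/- Let r ≥ 1 and let Γ ⊆ (ℕ ∪ {∞})^r be the tropical semiring generated by v_1, …, v_r, where (v_i)_i = ∞ and (v_i)_j = 1 for j ≠ i. If J ⊆ {1,…,r} is nonempty with #J < r − k for some k ∈ ℕ, then there is no element γ ∈ Γ with γ_j = k for all j ∈ J and γ_i > k for all i ∉ J. -/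
/-- 'Only if' direction of the fiber lemma for an ordinary singular point:
if `#J < r − k` then there is no `γ` in the value semiring with `γ_j = k`
on `J` and `γ_i > k` off `J`. -/
theorem fiber_empty_of_card_lt_ordinary_point (r : ℕ) (hr : 1 ≤ r) (k : ℕ)
    (J : Finset (Fin r)) (hJ : J.Nonempty) (hcard : J.card < r - k) :
    ¬ ∃ γ ∈ tropGen (Set.range (fun i : Fin r => fun j : Fin r =>
          if j = i then (⊤ : ℕ∞) else 1)),
        (∀ j ∈ J, γ j = (k : ℕ∞)) ∧ (∀ i ∉ J, (k : ℕ∞) < γ i) := by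
  rintro ⟨γ, hγ, hJk, hout⟩
  -- the invariant set
  set S : Set (Fin r → ℕ∞) :=
    {g | ∀ m : ℕ, (∃ j, g j ≤ (m : ℕ∞)) →
      (Finset.univ.filter (fun i => (m : ℕ∞) < g i)).card ≤ m} with hSdef
  have hmem : S ∈ {T : Set (Fin r → ℕ∞) | 0 ∈ T ∧
      (Set.range (fun i : Fin r => fun j : Fin r =>
          if j = i then (⊤ : ℕ∞) else 1)) ⊆ T ∧
      (∀ a ∈ T, ∀ b ∈ T, a + b ∈ T) ∧
      (∀ a ∈ T, ∀ b ∈ T, (fun i => min (a i) (b i)) ∈ T)} := by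
    refine ⟨?_, ?_, ?_, ?_⟩
    · intro m _
      have : (Finset.univ.filter (fun i => (m : ℕ∞) < (0 : Fin r → ℕ∞) i)) = ∅ := by
        ext i; simp
      simp [this]
    · rintro g ⟨i, rfl⟩ m hm
      rcases hm with ⟨j, hj⟩
      by_cases hji : j = i
      · simp [hji] at hj
      · simp only [hji, if_false] at hj
        have hm1 : 1 ≤ m := by exact_mod_cast hj
        have hsub : (Finset.univ.filter (fun j' : Fin r =>
            (m : ℕ∞) < if j' = i then (⊤ : ℕ∞) else 1)) ⊆ {i} := by
          intro x hx
          simp only [Finset.mem_filter, Finset.mem_univ, true_and] at hx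
          by_contra hxi
          simp only [Finset.mem_singleton] at hxi
          simp only [hxi, if_false] at hx
          exact absurd hx (not_lt.mpr hj)
        calc _ ≤ ({i} : Finset (Fin r)).card := Finset.card_le_card hsub
          _ = 1 := Finset.card_singleton i
          _ ≤ m := hm1
    · intro a ha b hb m hm
      rcases hm with ⟨j, hj⟩
      have haj : a j ≠ ⊤ := by
        intro h
        have : (⊤ : ℕ∞) ≤ (m : ℕ∞) := le_trans (h ▸ le_self_add) hj
        simp at this
      have hbj : b j ≠ ⊤ := by
        intro h
        have : (⊤ : ℕ∞) ≤ (m : ℕ∞) := le_trans (h ▸ le_add_self) hj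
        simp at this
      obtain ⟨p, hp⟩ : ∃ p : ℕ, a j = (p : ℕ∞) := by
        lift a j to ℕ using haj with p hp
        exact ⟨p, rfl⟩
      obtain ⟨q, hq⟩ : ∃ q : ℕ, b j = (q : ℕ∞) := by
        lift b j to ℕ using hbj with q hq
        exact ⟨q, rfl⟩
      have hpq : p + q ≤ m := by
        rw [Pi.add_apply, hp, hq, ← Nat.cast_add] at hj
        exact_mod_cast hj
      have hpa : (Finset.univ.filter (fun i => (p : ℕ∞) < a i)).card ≤ p :=
        ha p ⟨j, hp.le⟩
      have hqb : (Finset.univ.filter (fun i => (q : ℕ∞) < b i)).card ≤ q :=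
        hb q ⟨j, hq.le⟩
      have hsub : (Finset.univ.filter (fun i => (m : ℕ∞) < (a + b) i)) ⊆
          (Finset.univ.filter (fun i => (p : ℕ∞) < a i)) ∪
          (Finset.univ.filter (fun i => (q : ℕ∞) < b i)) := by
        intro x hx
        simp only [Finset.mem_filter, Finset.mem_univ, true_and, Finset.mem_union,
          Pi.add_apply] at hx ⊢
        by_contra hc
        push_neg at hc
        have : a x + b x ≤ (m : ℕ∞) := by
          calc a x + b x ≤ (p : ℕ∞) + (q : ℕ∞) := add_le_add hc.1 hc.2
            _ = ((p + q : ℕ) : ℕ∞) := by push_cast; ring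
            _ ≤ (m : ℕ∞) := by exact_mod_cast hpq
        exact absurd (lt_of_le_of_lt this hx) (lt_irrefl _)
      calc _ ≤ _ := Finset.card_le_card hsub
        _ ≤ _ + _ := Finset.card_union_le _ _
        _ ≤ p + q := Nat.add_le_add hpa hqb
        _ ≤ m := hpq
    · intro a ha b hb m hm
      rcases hm with ⟨j, hj⟩
      rcases min_le_iff.mp hj with h | h
      · have := ha m ⟨j, h⟩
        refine le_trans (Finset.card_le_card ?_) this
        intro x hx
        simp only [Finset.mem_filter, Finset.mem_univ, true_and] at hx ⊢
        exact lt_of_lt_of_le hx (min_le_left _ _)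
      · have := hb m ⟨j, h⟩
        refine le_trans (Finset.card_le_card ?_) this
        intro x hx
        simp only [Finset.mem_filter, Finset.mem_univ, true_and] at hx ⊢
        exact lt_of_lt_of_le hx (min_le_right _ _)
  have hγS : γ ∈ S := hγ S hmem
  obtain ⟨j0, hj0⟩ := hJ
  have hkey : (Finset.univ.filter (fun i => (k : ℕ∞) < γ i)).card ≤ k :=
    hγS k ⟨j0, (hJk j0 hj0).le⟩
  have hsub : Jᶜ ⊆ Finset.univ.filter (fun i => (k : ℕ∞) < γ i) := by
    intro x hx
    simp only [Finset.mem_compl] at hx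
    simp only [Finset.mem_filter, Finset.mem_univ, true_and]
    exact hout x hx
  have hcc : Jᶜ.card ≤ k := le_trans (Finset.card_le_card hsub) hkey
  rw [Finset.card_compl, Fintype.card_fin] at hcc
  omega
end

section
/- Let n, m be coprime with 1 < n < m, r ≥ 1, and let Γ ⊆ (ℕ ∪ {∞})^r be the tropical semiring generated by v_1 = (n,…,n), v_2 = (m,…,m), and w_1, …, w_r with (w_i)_i = ∞ and (w_i)_j = nm for j ≠ i. If k ∈ ℕ satisfies k ∉ ⟨n,m⟩ (the numerical semigroup generated by n and m), then for every nonempty J ⊆ {1,…,r} the J-fiber F_J(k̄) of k̄ = (k,…,k) with respect to Γ is empty. -/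
/-- Generators of the value semiring of a plane curve with `r` branches,
each with semigroup `⟨n,m⟩` and pairwise intersection multiplicities `nm`:
`v₁ = (n,…,n)`, `v₂ = (m,…,m)`, and `w_i` with `(w_i)_i = ∞`, `(w_i)_j = nm`. -/
def genNM (n m r : ℕ) : Set (Fin r → ℕ∞) :=
  {fun _ => (n : ℕ∞)} ∪ {fun _ => (m : ℕ∞)} ∪
    Set.range (fun i : Fin r => fun j : Fin r =>
      if j = i then (⊤ : ℕ∞) else ((n * m : ℕ) : ℕ∞))


/-- If `k ∉ ⟨n,m⟩`, then every `J`-fiber of the diagonal element `k̄` with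
respect to the value semiring is empty. -/
theorem fiber_empty_of_not_mem_nm (n m r : ℕ) (hn : 1 < n) (hnm : n < m)
    (hcop : Nat.Coprime n m) (hr : 1 ≤ r) (k : ℕ)
    (hk : ¬ ∃ a b : ℕ, k = a * n + b * m)
    (J : Finset (Fin r)) (hJ : J.Nonempty) :
    ¬ ∃ δ ∈ tropGen (genNM n m r),
        (∀ j ∈ J, δ j = (k : ℕ∞)) ∧ (∀ i ∉ J, (k : ℕ∞) < δ i) := by
  rintro ⟨δ, hδ, hJeq, -⟩
  -- The key set: coordinates lie in ⟨n,m⟩ ∪ {∞}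
  have hS : δ ∈ {δ : Fin r → ℕ∞ | ∀ i, ∃ a b : ℕ, δ i = ((a * n + b * m : ℕ) : ℕ∞) ∨ δ i = ⊤} := by
    apply hδ
    refine ⟨?_, ?_, ?_, ?_⟩
    · intro i; exact ⟨0, 0, Or.inl (by simp)⟩
    · rintro x (hx | ⟨i, rfl⟩)
      · rcases hx with hx | hx
        · intro j; exact ⟨1, 0, Or.inl (by simp [Set.mem_singleton_iff.mp hx])⟩
        · intro j; exact ⟨0, 1, Or.inl (by simp [Set.mem_singleton_iff.mp hx])⟩
      · intro j
        by_cases h : j = i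
        · exact ⟨0, 0, Or.inr (by simp [h])⟩
        · exact ⟨m, 0, Or.inl (by simp [h, Nat.mul_comm])⟩
    · intro a ha b hb i
      rcases ha i with ⟨a1, b1, h1 | h1⟩ <;> rcases hb i with ⟨a2, b2, h2 | h2⟩
      · exact ⟨a1 + a2, b1 + b2, Or.inl (by
          simp only [Pi.add_apply, h1, h2, ← Nat.cast_add]; ring_nf)⟩
      · exact ⟨0, 0, Or.inr (by simp [Pi.add_apply, h2])⟩
      · exact ⟨0, 0, Or.inr (by simp [Pi.add_apply, h1])⟩
      · exact ⟨0, 0, Or.inr (by simp [Pi.add_apply, h1, h2])⟩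
    · intro a ha b hb i
      rcases le_total (a i) (b i) with h | h
      · rcases ha i with ⟨a1, b1, h1⟩
        exact ⟨a1, b1, by simpa [min_eq_left h] using h1⟩
      · rcases hb i with ⟨a2, b2, h2⟩
        exact ⟨a2, b2, by simpa [min_eq_right h] using h2⟩
  obtain ⟨j, hj⟩ := hJ
  rcases hS j with ⟨a, b, h | h⟩
  · rw [hJeq j hj] at h
    exact hk ⟨a, b, by exact_mod_cast h⟩
  · rw [hJeq j hj] at h
    exact (ENat.coe_ne_top k) h
end
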